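/- Define Λ(b,y) := −e₄(b,y)/e₃(b,y) and L(y) := (1/(γ₁(r) − γ₂(r)))·log( (γ₂(r)²/γ₁(r)²)·Λ(y,y) ) − y. Then: (i) for each y ∈ [y_l, y_u], the map b ↦ Λ(b,y) is strictly decreasing on (b*_{r+q}, y); (ii) for each y ∈ [y_l, y_u], the map b ↦ e₃(b,y) is strictly decreasing on (b*_{r+q}, y); (iii) L is strictly decreasing on (y_l, y_u); (iv) L(y_u) = 0. -/

import Mathlib

open Real Set Filter

noncomputable def gam1 (μ σ ρ : ℝ) : ℝ := Real.sqrt (μ^2/σ^4 + 2*ρ/σ^2) - μ/σ^2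

noncomputable def gam2 (μ σ ρ : ℝ) : ℝ := -Real.sqrt (μ^2/σ^4 + 2*ρ/σ^2) - μ/σ^2

/-- The classical optimal dividend boundary `b*_ρ`. -/
noncomputable def bstar (μ σ ρ : ℝ) : ℝ :=
  Real.log ((gam2 μ σ ρ)^2 / (gam1 μ σ ρ)^2) / (gam1 μ σ ρ - gam2 μ σ ρ)

/-- The classical value function `V_ρ`. -/
noncomputable def Vfun (μ σ ρ x : ℝ) : ℝ :=
  if x < bstar μ σ ρ then
    (Real.exp (gam1 μ σ ρ * x) - Real.exp (gam2 μ σ ρ * x)) /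
      (gam1 μ σ ρ * Real.exp (gam1 μ σ ρ * bstar μ σ ρ) -
        gam2 μ σ ρ * Real.exp (gam2 μ σ ρ * bstar μ σ ρ))
  else
    (Real.exp (gam1 μ σ ρ * bstar μ σ ρ) - Real.exp (gam2 μ σ ρ * bstar μ σ ρ)) /
      (gam1 μ σ ρ * Real.exp (gam1 μ σ ρ * bstar μ σ ρ) -
        gam2 μ σ ρ * Real.exp (gam2 μ σ ρ * bstar μ σ ρ)) + x - bstar μ σ ρ

/-- `δ(y) = e^{γ₁(r+q)y} − e^{γ₂(r+q)y}`. -/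
noncomputable def del (μ σ r q y : ℝ) : ℝ :=
  Real.exp (gam1 μ σ (r+q) * y) - Real.exp (gam2 μ σ (r+q) * y)

/-- `δ'(y)`. -/
noncomputable def delP (μ σ r q y : ℝ) : ℝ :=
  gam1 μ σ (r+q) * Real.exp (gam1 μ σ (r+q) * y) -
    gam2 μ σ (r+q) * Real.exp (gam2 μ σ (r+q) * y)

/-- `δ''(y)`. -/
noncomputable def delPP (μ σ r q y : ℝ) : ℝ :=
  (gam1 μ σ (r+q))^2 * Real.exp (gam1 μ σ (r+q) * y) -
    (gam2 μ σ (r+q))^2 * Real.exp (gam2 μ σ (r+q) * y)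

/-- `y_u := b*_{r+q} + μ/r − μ/(r+q)`. -/
noncomputable def yUpper (μ σ r q : ℝ) : ℝ := bstar μ σ (r+q) + μ/r - μ/(r+q)

/-- `Δ(y)`. -/
noncomputable def DeltaF (μ σ r q y : ℝ) : ℝ :=
  (1/(gam1 μ σ r - gam2 μ σ r)) *
    Real.log ((gam2 μ σ r)^2 * (delP μ σ r q y - gam1 μ σ r * del μ σ r q y) /
      ((gam1 μ σ r)^2 * (delP μ σ r q y - gam2 μ σ r * del μ σ r q y)))

/-- `b*(y) = y + Δ(y)`. -/
noncomputable def bstarY (μ σ r q y : ℝ) : ℝ := y + DeltaF μ σ r q y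

noncomputable def psiF (μ σ ρ x : ℝ) : ℝ := Real.exp (gam1 μ σ ρ * x)
noncomputable def phiF (μ σ ρ x : ℝ) : ℝ := Real.exp (gam2 μ σ ρ * x)
noncomputable def psiP (μ σ ρ x : ℝ) : ℝ := gam1 μ σ ρ * Real.exp (gam1 μ σ ρ * x)
noncomputable def phiP (μ σ ρ x : ℝ) : ℝ := gam2 μ σ ρ * Real.exp (gam2 μ σ ρ * x)

/-- `η(y;b) = ψ'_r(b)φ_r(y) − φ'_r(b)ψ_r(y)`. -/
noncomputable def etaF (μ σ r y b : ℝ) : ℝ :=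
  psiP μ σ r b * phiF μ σ r y - phiP μ σ r b * psiF μ σ r y

/-- `η'(y;b)` (derivative in `y`). -/
noncomputable def etaP (μ σ r y b : ℝ) : ℝ :=
  psiP μ σ r b * phiP μ σ r y - phiP μ σ r b * psiP μ σ r y

/-- `K₁(y)`. -/
noncomputable def K1 (μ σ r q y : ℝ) : ℝ :=
  (psiF μ σ r y * etaP μ σ r y (bstarY μ σ r q y) -
    psiP μ σ r y * etaF μ σ r y (bstarY μ σ r q y)) /
  (psiP μ σ r (bstarY μ σ r q y) *
    (del μ σ r q y * etaP μ σ r y (bstarY μ σ r q y) -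
      delP μ σ r q y * etaF μ σ r y (bstarY μ σ r q y)))

/-- `K₂(y) = −K₁(y)`. -/
noncomputable def K2 (μ σ r q y : ℝ) : ℝ := -K1 μ σ r q y

/-- `K₃(y)`. -/
noncomputable def K3 (μ σ r q y : ℝ) : ℝ :=
  (phiP μ σ r (bstarY μ σ r q y) *
      (del μ σ r q y * psiP μ σ r y - delP μ σ r q y * psiF μ σ r y) +
    del μ σ r q y * etaP μ σ r y (bstarY μ σ r q y) -
      delP μ σ r q y * etaF μ σ r y (bstarY μ σ r q y)) /
  (psiP μ σ r (bstarY μ σ r q y) *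
    (del μ σ r q y * etaP μ σ r y (bstarY μ σ r q y) -
      delP μ σ r q y * etaF μ σ r y (bstarY μ σ r q y)))

/-- `K₄(y)`. -/
noncomputable def K4 (μ σ r q y : ℝ) : ℝ :=
  (psiF μ σ r y * delP μ σ r q y - psiP μ σ r y * del μ σ r q y) /
  (del μ σ r q y * etaP μ σ r y (bstarY μ σ r q y) -
    delP μ σ r q y * etaF μ σ r y (bstarY μ σ r q y))

/-- The candidate value function `w(·;y)` in the subcritical regime. -/
noncomputable def wfun (μ σ r q y x : ℝ) : ℝ :=
  if x < y then
    K1 μ σ r q y * Real.exp (gam1 μ σ (r+q) * x) + K2 μ σ r q y * Real.exp (gam2 μ σ (r+q) * x)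
  else if x < bstarY μ σ r q y then
    K3 μ σ r q y * Real.exp (gam1 μ σ r * x) + K4 μ σ r q y * Real.exp (gam2 μ σ r * x)
  else
    K3 μ σ r q y * Real.exp (gam1 μ σ r * bstarY μ σ r q y) +
      K4 μ σ r q y * Real.exp (gam2 μ σ r * bstarY μ σ r q y) + x - bstarY μ σ r q y

/-- The function `f` characterising the critical level `y_l`. -/
noncomputable def fF (μ σ r q y : ℝ) : ℝ :=
  (-(gam1 μ σ r / gam2 μ σ r) * delP μ σ r q y + gam1 μ σ r * del μ σ r q y) *
    ((gam2 μ σ r)^2/(gam1 μ σ r)^2 *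
      ((delP μ σ r q y - gam1 μ σ r * del μ σ r q y) /
        (delP μ σ r q y - gam2 μ σ r * del μ σ r q y)))
      ^ (gam1 μ σ r / (gam1 μ σ r - gam2 μ σ r))
  - delP μ σ r q (bstar μ σ (r+q))

noncomputable def e1F (μ σ r q b : ℝ) : ℝ :=
  (phiF μ σ (r+q) b - phiP μ σ (r+q) b * Vfun μ σ (r+q) b) /
  (psiP μ σ (r+q) b * phiF μ σ (r+q) b - psiF μ σ (r+q) b * phiP μ σ (r+q) b)

noncomputable def e2F (μ σ r q b : ℝ) : ℝ :=
  (psiP μ σ (r+q) b * Vfun μ σ (r+q) b - psiF μ σ (r+q) b) /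
  (psiP μ σ (r+q) b * phiF μ σ (r+q) b - psiF μ σ (r+q) b * phiP μ σ (r+q) b)

noncomputable def e3F (μ σ r q b y : ℝ) : ℝ :=
  (e1F μ σ r q b * (phiF μ σ r y * psiP μ σ (r+q) y - phiP μ σ r y * psiF μ σ (r+q) y) +
    e2F μ σ r q b * (phiF μ σ r y * phiP μ σ (r+q) y - phiP μ σ r y * phiF μ σ (r+q) y)) /
  (psiP μ σ r y * phiF μ σ r y - psiF μ σ r y * phiP μ σ r y)

noncomputable def e4F (μ σ r q b y : ℝ) : ℝ :=
  (e1F μ σ r q b * (psiP μ σ r y * psiF μ σ (r+q) y - psiF μ σ r y * psiP μ σ (r+q) y) +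
    e2F μ σ r q b * (psiP μ σ r y * phiF μ σ (r+q) y - psiF μ σ r y * phiP μ σ (r+q) y)) /
  (psiP μ σ r y * phiF μ σ r y - psiF μ σ r y * phiP μ σ r y)

/-- The function `H(b,y)` from the critical regime. -/
noncomputable def Hfun (μ σ r q b y : ℝ) : ℝ :=
  (gam1 μ σ r - gam2 μ σ r) *
    (-gam2 μ σ r / gam1 μ σ r) ^ ((gam1 μ σ r + gam2 μ σ r)/(gam1 μ σ r - gam2 μ σ r)) *
    (e3F μ σ r q b y) ^ (-gam2 μ σ r/(gam1 μ σ r - gam2 μ σ r)) *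
    (-e4F μ σ r q b y) ^ (gam1 μ σ r/(gam1 μ σ r - gam2 μ σ r))

/-- `Λ(b,y) = −e₄(b,y)/e₃(b,y)`. -/
noncomputable def Lamfun (μ σ r q b y : ℝ) : ℝ := -e4F μ σ r q b y / e3F μ σ r q b y

/-- `L(y)`. -/
noncomputable def Lfun (μ σ r q y : ℝ) : ℝ :=
  (1/(gam1 μ σ r - gam2 μ σ r)) *
    Real.log ((gam2 μ σ r)^2/(gam1 μ σ r)^2 * Lamfun μ σ r q y y) - y

/-!
Past `b*_{r+q}` the value function `V_{r+q}` is affine with slope one, so the coefficients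
`e₁(b), e₂(b)` of the `C¹` fit of `e^{γ₁(r+q)x}, e^{γ₂(r+q)x}` to `V_{r+q}` at `b` are explicit; by
the Vieta relations for `γ₁, γ₂`, `e₁` decreases, `e₂` increases, and their Wronskian in `b` is
positive. Cramer's rule writes `e₃, e₄` as combinations of `e₁, e₂` whose coefficients are
Wronskians of exponentials: their signs give (ii), and their determinant is a product of two
positive Wronskians (Cauchy–Binet), which gives (i). At `b = y` the two fits compose, so that
`L(y) = log (γ₂²(1 - γ₁V) / (γ₁²(1 - γ₂V))) / (γ₁ - γ₂)` with `γᵢ = γᵢ(r)` and `V = V_{r+q}(y)`.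
This decreases in `V`, hence in `y` (iii), and the Vieta relations make it vanish at
`V = μ/r`, that is at `y = y_u` (iv).
-/

section Roots

variable {μ σ ρ ρ' : ℝ}

lemma abs_div_sq_lt_sqrt (hσ : σ ≠ 0) (hρ : 0 < ρ) :
    |μ / σ^2| < √(μ^2/σ^4 + 2*ρ/σ^2) := by
  rw [Real.lt_sqrt (abs_nonneg _), sq_abs, div_pow, ← pow_mul]
  have : 0 < 2*ρ/σ^2 := by positivity
  linarith

lemma gam1_pos (hσ : σ ≠ 0) (hρ : 0 < ρ) : 0 < gam1 μ σ ρ := by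
  have := abs_div_sq_lt_sqrt (μ := μ) hσ hρ
  have := le_abs_self (μ / σ^2)
  unfold gam1; linarith

lemma gam2_neg (hσ : σ ≠ 0) (hρ : 0 < ρ) : gam2 μ σ ρ < 0 := by
  have := abs_div_sq_lt_sqrt (μ := μ) hσ hρ
  have := neg_abs_le (μ / σ^2)
  unfold gam2; linarith

lemma gam2_lt_gam1 (hσ : σ ≠ 0) (hρ : 0 < ρ) : gam2 μ σ ρ < gam1 μ σ ρ :=
  (gam2_neg hσ hρ).trans (gam1_pos hσ hρ)

lemma gam2_lt_gam2_of_lt (hσ : σ ≠ 0) (hρ : 0 ≤ ρ) (h : ρ < ρ') : gam2 μ σ ρ' < gam2 μ σ ρ := by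
  have hσ2 : 0 < σ^2 := by positivity
  have : μ^2/σ^4 + 2*ρ/σ^2 < μ^2/σ^4 + 2*ρ'/σ^2 := by gcongr
  have := Real.sqrt_lt_sqrt (by positivity) this
  unfold gam2; linarith

lemma gam1_add_gam2 (hσ : σ ≠ 0) : σ^2 * (gam1 μ σ ρ + gam2 μ σ ρ) = -(2*μ) := by
  unfold gam1 gam2; field_simp; ring

lemma gam1_mul_gam2 (hσ : σ ≠ 0) (hρ : 0 ≤ ρ) : σ^2 * (gam1 μ σ ρ * gam2 μ σ ρ) = -(2*ρ) := by
  have hs := Real.sq_sqrt (show 0 ≤ μ^2/σ^4 + 2*ρ/σ^2 by positivity)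
  unfold gam1 gam2
  field_simp at hs ⊢
  linear_combination -hs

lemma gam1_add_gam2_eq_mul (hσ : σ ≠ 0) (hρ : 0 < ρ) :
    gam1 μ σ ρ + gam2 μ σ ρ = gam1 μ σ ρ * gam2 μ σ ρ * (μ / ρ) := by
  have hsum := gam1_add_gam2 (μ := μ) (ρ := ρ) hσ
  have hprod := gam1_mul_gam2 (μ := μ) hσ hρ.le
  field_simp
  apply mul_left_cancel₀ (pow_ne_zero 2 hσ)
  linear_combination ρ * hsum - μ * hprod

lemma gam1_mul_lt (hσ : σ ≠ 0) (hρ : 0 < ρ) : gam1 μ σ ρ * μ < ρ := by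
  have hsum := gam1_add_gam2 (μ := μ) (ρ := ρ) hσ
  have hprod := gam1_mul_gam2 (μ := μ) hσ hρ.le
  have : 0 < σ^2 * gam1 μ σ ρ ^ 2 := by have := gam1_pos (μ := μ) hσ hρ; positivity
  linarith [show 2 * (gam1 μ σ ρ * μ) = 2 * ρ - σ^2 * gam1 μ σ ρ ^ 2 by
    linear_combination gam1 μ σ ρ * hsum - hprod]

end Roots

section Bstar

variable {μ σ ρ : ℝ}

lemma sq_mul_exp_bstar (hσ : σ ≠ 0) (hρ : 0 < ρ) :
    gam1 μ σ ρ ^ 2 * exp (gam1 μ σ ρ * bstar μ σ ρ) =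
      gam2 μ σ ρ ^ 2 * exp (gam2 μ σ ρ * bstar μ σ ρ) := by
  have h1 := gam1_pos (μ := μ) hσ hρ
  have h2 := gam2_neg (μ := μ) hσ hρ
  have hB : (gam1 μ σ ρ - gam2 μ σ ρ) * bstar μ σ ρ = log (gam2 μ σ ρ ^ 2 / gam1 μ σ ρ ^ 2) := by
    unfold bstar; field_simp [(sub_pos.2 (h2.trans h1)).ne']
  have : exp (gam1 μ σ ρ * bstar μ σ ρ) =
      gam2 μ σ ρ ^ 2 / gam1 μ σ ρ ^ 2 * exp (gam2 μ σ ρ * bstar μ σ ρ) := by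
    rw [← exp_log (div_pos (by nlinarith) (by positivity)), ← hB, ← exp_add]
    ring_nf
  rw [this]; field_simp

lemma Vfun_of_bstar_le (hσ : σ ≠ 0) (hρ : 0 < ρ) {x : ℝ} (hx : bstar μ σ ρ ≤ x) :
    Vfun μ σ ρ x = μ / ρ + (x - bstar μ σ ρ) := by
  have h1 := gam1_pos (μ := μ) hσ hρ
  have h2 := gam2_neg (μ := μ) hσ hρ
  have hsq := sq_mul_exp_bstar (μ := μ) hσ hρ
  have hsum := gam1_add_gam2 (μ := μ) (ρ := ρ) hσ
  have hprod := gam1_mul_gam2 (μ := μ) hσ hρ.le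
  have hE₁ := exp_pos (gam1 μ σ ρ * bstar μ σ ρ)
  have hE₂ := exp_pos (gam2 μ σ ρ * bstar μ σ ρ)
  rw [Vfun, if_neg hx.not_gt]
  generalize exp (gam1 μ σ ρ * bstar μ σ ρ) = E₁ at *
  generalize exp (gam2 μ σ ρ * bstar μ σ ρ) = E₂ at *
  suffices (E₁ - E₂) / (gam1 μ σ ρ * E₁ - gam2 μ σ ρ * E₂) = μ / ρ by rw [this]; ring
  have hden : 0 < gam1 μ σ ρ * E₁ - gam2 μ σ ρ * E₂ := by
    nlinarith [mul_pos h1 hE₁, mul_pos (neg_pos.2 h2) hE₂]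
  rw [div_eq_div_iff hden.ne' hρ.ne']
  linear_combination ((E₁ - E₂) / 2) * hprod -
    ((gam1 μ σ ρ * E₁ - gam2 μ σ ρ * E₂) / 2) * hsum + (σ^2 / 2) * hsq

end Bstar

lemma strictAntiOn_of_hasDerivAt_neg {f : ℝ → ℝ} {s : Set ℝ} (hs : Convex ℝ s) (hso : IsOpen s)
    (h : ∀ x ∈ s, ∃ f', HasDerivAt f f' x ∧ f' < 0) : StrictAntiOn f s := by
  choose! f' hf hneg using h
  refine strictAntiOn_of_deriv_neg hs (fun x hx => (hf x hx).continuousAt.continuousWithinAt) ?_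
  rw [hso.interior_eq]
  exact fun x hx => (hf x hx).deriv ▸ hneg x hx

lemma strictAntiOn_div_of_hasDerivAt {f g : ℝ → ℝ} {s : Set ℝ} (hs : Convex ℝ s) (hso : IsOpen s)
    (hg : ∀ x ∈ s, g x ≠ 0)
    (h : ∀ x ∈ s, ∃ f' g', HasDerivAt f f' x ∧ HasDerivAt g g' x ∧ f' * g x - f x * g' < 0) :
    StrictAntiOn (fun x => f x / g x) s := by
  refine strictAntiOn_of_hasDerivAt_neg hs hso fun x hx => ?_
  obtain ⟨f', g', hf, hg', hW⟩ := h x hx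
  exact ⟨_, hf.div hg' (hg x hx), div_neg_of_neg_of_pos hW (pow_two_pos_of_ne_zero (hg x hx))⟩

/-- The Wronskian `u v' - u' v` of `u = exp (α ·)` and `v = exp (β ·)`. -/
noncomputable def expWronskian (α β x : ℝ) : ℝ := (β - α) * exp (α * x) * exp (β * x)

section ExpWronskian

variable {α β γ δ x : ℝ}

lemma expWronskian_eq :
    exp (α * x) * (β * exp (β * x)) - α * exp (α * x) * exp (β * x) = expWronskian α β x := by
  unfold expWronskian; ring

lemma expWronskian_eq' :
    β * exp (β * x) * exp (α * x) - exp (β * x) * (α * exp (α * x)) = expWronskian α β x := by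
  unfold expWronskian; ring

lemma expWronskian_pos (h : α < β) : 0 < expWronskian α β x := by
  unfold expWronskian; have := sub_pos.2 h; positivity

lemma expWronskian_neg (h : β < α) : expWronskian α β x < 0 := by
  unfold expWronskian
  exact mul_neg_of_neg_of_pos (mul_neg_of_neg_of_pos (sub_neg.2 h) (exp_pos _)) (exp_pos _)

lemma expWronskian_mul_sub_mul :
    expWronskian α γ x * expWronskian δ β x - expWronskian α δ x * expWronskian γ β x =
      expWronskian α β x * expWronskian δ γ x := by
  unfold expWronskian; ring

end ExpWronskian

section Coefficients

variable {μ σ r q b y : ℝ}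

lemma e1F_eq (hσ : σ ≠ 0) (hrq : 0 < r + q) :
    e1F μ σ r q b = (1 - gam2 μ σ (r+q) * Vfun μ σ (r+q) b) /
      ((gam1 μ σ (r+q) - gam2 μ σ (r+q)) * exp (gam1 μ σ (r+q) * b)) := by
  have := (sub_pos.2 (gam2_lt_gam1 (μ := μ) hσ hrq)).ne'
  simp only [e1F, psiF, phiF, psiP, phiP, expWronskian_eq']
  unfold expWronskian
  field_simp

lemma e2F_eq (hσ : σ ≠ 0) (hrq : 0 < r + q) :
    e2F μ σ r q b = (gam1 μ σ (r+q) * Vfun μ σ (r+q) b - 1) /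
      ((gam1 μ σ (r+q) - gam2 μ σ (r+q)) * exp (gam2 μ σ (r+q) * b)) := by
  have := (sub_pos.2 (gam2_lt_gam1 (μ := μ) hσ hrq)).ne'
  simp only [e2F, psiF, phiF, psiP, phiP, expWronskian_eq']
  unfold expWronskian
  field_simp

lemma hasDerivAt_e1F (hσ : σ ≠ 0) (hrq : 0 < r + q) (hb : bstar μ σ (r+q) < b) :
    HasDerivAt (e1F μ σ r q) (gam1 μ σ (r+q) * gam2 μ σ (r+q) * (b - bstar μ σ (r+q)) /
      ((gam1 μ σ (r+q) - gam2 μ σ (r+q)) * exp (gam1 μ σ (r+q) * b))) b := by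
  have hG := sub_pos.2 (gam2_lt_gam1 (μ := μ) hσ hrq)
  have hvieta := gam1_add_gam2_eq_mul (μ := μ) hσ hrq
  have hE : e1F μ σ r q =ᶠ[nhds b] fun t =>
      (1 - gam2 μ σ (r+q) * (μ / (r+q) + (t - bstar μ σ (r+q)))) /
        ((gam1 μ σ (r+q) - gam2 μ σ (r+q)) * exp (gam1 μ σ (r+q) * t)) := by
    filter_upwards [Ioi_mem_nhds hb] with t ht
    rw [e1F_eq hσ hrq, Vfun_of_bstar_le hσ hrq ht.le]
  refine HasDerivAt.congr_of_eventuallyEq ?_ hE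
  generalize gam1 μ σ (r+q) = G₁ at *
  generalize gam2 μ σ (r+q) = G₂ at *
  generalize μ / (r+q) = m at *
  refine (((((hasDerivAt_id' b).sub_const _).const_add m).const_mul G₂).const_sub 1 |>.div
    (((hasDerivAt_id' b).const_mul G₁).exp.const_mul (G₁ - G₂))
      (mul_pos hG (exp_pos _)).ne').congr_deriv ?_
  field_simp
  linear_combination -hvieta

lemma hasDerivAt_e2F (hσ : σ ≠ 0) (hrq : 0 < r + q) (hb : bstar μ σ (r+q) < b) :
    HasDerivAt (e2F μ σ r q) (-(gam1 μ σ (r+q) * gam2 μ σ (r+q) * (b - bstar μ σ (r+q))) /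
      ((gam1 μ σ (r+q) - gam2 μ σ (r+q)) * exp (gam2 μ σ (r+q) * b))) b := by
  have hG := sub_pos.2 (gam2_lt_gam1 (μ := μ) hσ hrq)
  have hvieta := gam1_add_gam2_eq_mul (μ := μ) hσ hrq
  have hE : e2F μ σ r q =ᶠ[nhds b] fun t =>
      (gam1 μ σ (r+q) * (μ / (r+q) + (t - bstar μ σ (r+q))) - 1) /
        ((gam1 μ σ (r+q) - gam2 μ σ (r+q)) * exp (gam2 μ σ (r+q) * t)) := by
    filter_upwards [Ioi_mem_nhds hb] with t ht
    rw [e2F_eq hσ hrq, Vfun_of_bstar_le hσ hrq ht.le]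
  refine HasDerivAt.congr_of_eventuallyEq ?_ hE
  generalize gam1 μ σ (r+q) = G₁ at *
  generalize gam2 μ σ (r+q) = G₂ at *
  generalize μ / (r+q) = m at *
  refine (((((hasDerivAt_id' b).sub_const _).const_add m).const_mul G₁).sub_const 1 |>.div
    (((hasDerivAt_id' b).const_mul G₂).exp.const_mul (G₁ - G₂))
      (mul_pos hG (exp_pos _)).ne').congr_deriv ?_
  field_simp
  linear_combination hvieta

lemma exists_hasDerivAt_e1F_e2F (hμ : 0 < μ) (hσ : σ ≠ 0) (hrq : 0 < r + q)
    (hb : bstar μ σ (r+q) < b) :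
    ∃ d₁ d₂, HasDerivAt (e1F μ σ r q) d₁ b ∧ HasDerivAt (e2F μ σ r q) d₂ b ∧
      d₁ < 0 ∧ 0 < d₂ ∧ 0 < e1F μ σ r q b * d₂ - d₁ * e2F μ σ r q b := by
  refine ⟨_, _, hasDerivAt_e1F hσ hrq hb, hasDerivAt_e2F hσ hrq hb, ?_⟩
  have hG₁ := gam1_pos (μ := μ) hσ hrq
  have hG₂ := gam2_neg (μ := μ) hσ hrq
  have hG := sub_pos.2 (gam2_lt_gam1 (μ := μ) hσ hrq)
  have hk : 0 < -(gam1 μ σ (r+q) * gam2 μ σ (r+q) * (b - bstar μ σ (r+q))) := by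
    have := mul_neg_of_pos_of_neg hG₁ hG₂; have := sub_pos.2 hb; nlinarith
  have hV : 0 < Vfun μ σ (r+q) b := by
    rw [Vfun_of_bstar_le hσ hrq hb.le]; have := div_pos hμ hrq; linarith
  rw [e1F_eq hσ hrq, e2F_eq hσ hrq]
  generalize gam1 μ σ (r+q) = G₁ at *
  generalize gam2 μ σ (r+q) = G₂ at *
  generalize Vfun μ σ (r+q) b = V at *
  refine ⟨div_neg_of_neg_of_pos (by linarith) (by positivity), div_pos hk (by positivity), ?_⟩
  refine (div_pos (mul_pos hk hV)
    (mul_pos hG (mul_pos (exp_pos (G₁ * b)) (exp_pos (G₂ * b))))).trans_eq ?_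
  field_simp
  ring

end Coefficients

section Matching

variable {μ σ r q b y : ℝ}

lemma e3F_eq : e3F μ σ r q b y =
    (e1F μ σ r q b * expWronskian (gam2 μ σ r) (gam1 μ σ (r+q)) y +
      e2F μ σ r q b * expWronskian (gam2 μ σ r) (gam2 μ σ (r+q)) y) /
    expWronskian (gam2 μ σ r) (gam1 μ σ r) y := by
  simp only [e3F, psiF, phiF, psiP, phiP, expWronskian_eq, expWronskian_eq']

lemma e4F_eq : e4F μ σ r q b y =
    (e1F μ σ r q b * expWronskian (gam1 μ σ (r+q)) (gam1 μ σ r) y +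
      e2F μ σ r q b * expWronskian (gam2 μ σ (r+q)) (gam1 μ σ r) y) /
    expWronskian (gam2 μ σ r) (gam1 μ σ r) y := by
  simp only [e4F, psiF, phiF, psiP, phiP, expWronskian_eq']

lemma e3F_strictAntiOn (hμ : 0 < μ) (hσ : σ ≠ 0) (hr : 0 < r) (hq : 0 < q) :
    StrictAntiOn (fun b => e3F μ σ r q b y) (Ioi (bstar μ σ (r+q))) := by
  have hrq : 0 < r + q := by linarith
  refine strictAntiOn_of_hasDerivAt_neg (convex_Ioi _) isOpen_Ioi fun b hb => ?_
  obtain ⟨d₁, d₂, h₁, h₂, hd₁, hd₂, -⟩ := exists_hasDerivAt_e1F_e2F hμ hσ hrq hb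
  simp only [e3F_eq]
  refine ⟨_, ((h₁.mul_const _).add (h₂.mul_const _)).div_const _, div_neg_of_neg_of_pos ?_
    (expWronskian_pos (gam2_lt_gam1 hσ hr))⟩
  have hP := expWronskian_pos (x := y) ((gam2_neg (μ := μ) hσ hr).trans (gam1_pos (μ := μ) hσ hrq))
  have hQ := expWronskian_neg (x := y)
    (gam2_lt_gam2_of_lt (μ := μ) hσ hr.le (lt_add_of_pos_right r hq))
  linarith [mul_neg_of_neg_of_pos hd₁ hP, mul_neg_of_pos_of_neg hd₂ hQ]

lemma e3F_diag (hσ : σ ≠ 0) (hr : 0 < r) (hrq : 0 < r + q) :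
    e3F μ σ r q y y = (1 - gam2 μ σ r * Vfun μ σ (r+q) y) /
      ((gam1 μ σ r - gam2 μ σ r) * exp (gam1 μ σ r * y)) := by
  have := (sub_pos.2 (gam2_lt_gam1 (μ := μ) hσ hrq)).ne'
  have := (sub_pos.2 (gam2_lt_gam1 (μ := μ) hσ hr)).ne'
  rw [e3F_eq, e1F_eq hσ hrq, e2F_eq hσ hrq]
  unfold expWronskian
  field_simp
  ring

lemma e4F_diag (hσ : σ ≠ 0) (hr : 0 < r) (hrq : 0 < r + q) :
    e4F μ σ r q y y = (gam1 μ σ r * Vfun μ σ (r+q) y - 1) /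
      ((gam1 μ σ r - gam2 μ σ r) * exp (gam2 μ σ r * y)) := by
  have := (sub_pos.2 (gam2_lt_gam1 (μ := μ) hσ hrq)).ne'
  have := (sub_pos.2 (gam2_lt_gam1 (μ := μ) hσ hr)).ne'
  rw [e4F_eq, e1F_eq hσ hrq, e2F_eq hσ hrq]
  unfold expWronskian
  field_simp
  ring

lemma e3F_pos (hμ : 0 < μ) (hσ : σ ≠ 0) (hr : 0 < r) (hq : 0 < q)
    (hb : bstar μ σ (r+q) < b) (hby : b ≤ y) : 0 < e3F μ σ r q b y := by
  have hrq : 0 < r + q := by linarith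
  have hy := hb.trans_le hby
  have hdiag : 0 < e3F μ σ r q y y := by
    have hV : 0 < Vfun μ σ (r+q) y := by
      rw [Vfun_of_bstar_le hσ hrq hy.le]; have := div_pos hμ hrq; linarith
    have := sub_pos.2 (gam2_lt_gam1 (μ := μ) hσ hr)
    rw [e3F_diag hσ hr hrq]
    exact div_pos (by nlinarith [gam2_neg (μ := μ) hσ hr]) (by positivity)
  rcases hby.lt_or_eq with hby | rfl
  · exact hdiag.trans (e3F_strictAntiOn hμ hσ hr hq hb hy hby)
  · exact hdiag

lemma Lamfun_strictAntiOn (hμ : 0 < μ) (hσ : σ ≠ 0) (hr : 0 < r) (hq : 0 < q) :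
    StrictAntiOn (fun b => Lamfun μ σ r q b y) (Ioo (bstar μ σ (r+q)) y) := by
  have hrq : 0 < r + q := by linarith
  refine strictAntiOn_div_of_hasDerivAt (f := fun b => -e4F μ σ r q b y)
    (g := fun b => e3F μ σ r q b y) (convex_Ioo _ _) isOpen_Ioo
    (fun b hb => (e3F_pos hμ hσ hr hq hb.1 hb.2.le).ne') fun b hb => ?_
  obtain ⟨d₁, d₂, h₁, h₂, -, -, hW⟩ := exists_hasDerivAt_e1F_e2F hμ hσ hrq hb.1
  simp only [e3F_eq, e4F_eq]
  refine ⟨_, _, (((h₁.mul_const _).add (h₂.mul_const _)).div_const _).neg,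
    ((h₁.mul_const _).add (h₂.mul_const _)).div_const _, ?_⟩
  set P := expWronskian (gam2 μ σ r) (gam1 μ σ (r+q)) y
  set Q := expWronskian (gam2 μ σ r) (gam2 μ σ (r+q)) y
  set C := expWronskian (gam1 μ σ (r+q)) (gam1 μ σ r) y
  set D := expWronskian (gam2 μ σ (r+q)) (gam1 μ σ r) y
  set W := expWronskian (gam2 μ σ r) (gam1 μ σ r) y
  have hW_r : 0 < W := expWronskian_pos (gam2_lt_gam1 hσ hr)
  have hW_rq := expWronskian_pos (x := y) (gam2_lt_gam1 (μ := μ) hσ hrq)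
  have hPDQC : P * D - Q * C = W * expWronskian (gam2 μ σ (r+q)) (gam1 μ σ (r+q)) y :=
    expWronskian_mul_sub_mul
  -- the Wronskian of `e₄, e₃` in `b` factors through that of `e₁, e₂`
  have : -((d₁ * C + d₂ * D) / W) * ((e1F μ σ r q b * P + e2F μ σ r q b * Q) / W) -
      -((e1F μ σ r q b * C + e2F μ σ r q b * D) / W) * ((d₁ * P + d₂ * Q) / W) =
      -((P * D - Q * C) * (e1F μ σ r q b * d₂ - d₁ * e2F μ σ r q b)) / W ^ 2 := by
    field_simp; ring
  rw [this, hPDQC]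
  exact div_neg_of_neg_of_pos (neg_neg_of_pos (by positivity)) (by positivity)

end Matching

section Threshold

variable {μ σ r q y : ℝ}

lemma Lfun_eq (hσ : σ ≠ 0) (hr : 0 < r) (hrq : 0 < r + q)
    (h₁ : 1 - gam1 μ σ r * Vfun μ σ (r+q) y ≠ 0) (h₂ : 1 - gam2 μ σ r * Vfun μ σ (r+q) y ≠ 0) :
    Lfun μ σ r q y = 1 / (gam1 μ σ r - gam2 μ σ r) *
      log (gam2 μ σ r ^ 2 * (1 - gam1 μ σ r * Vfun μ σ (r+q) y) /
        (gam1 μ σ r ^ 2 * (1 - gam2 μ σ r * Vfun μ σ (r+q) y))) := by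
  have ha₁ := gam1_pos (μ := μ) hσ hr
  have ha₂ := gam2_neg (μ := μ) hσ hr
  rw [Lfun, Lamfun, e3F_diag hσ hr hrq, e4F_diag hσ hr hrq]
  generalize Vfun μ σ (r+q) y = V at *
  generalize gam1 μ σ r = a₁ at *
  generalize gam2 μ σ r = a₂ at *
  have ha : a₁ - a₂ ≠ 0 := by linarith
  have hX : a₂ ^ 2 * (1 - a₁ * V) / (a₁ ^ 2 * (1 - a₂ * V)) ≠ 0 := by
    have := ha₂.ne; positivity
  have harg : a₂ ^ 2 / a₁ ^ 2 * (-((a₁ * V - 1) / ((a₁ - a₂) * exp (a₂ * y))) /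
      ((1 - a₂ * V) / ((a₁ - a₂) * exp (a₁ * y)))) =
      a₂ ^ 2 * (1 - a₁ * V) / (a₁ ^ 2 * (1 - a₂ * V)) * exp ((a₁ - a₂) * y) := by
    rw [show (a₁ - a₂) * y = a₁ * y - a₂ * y by ring, exp_sub]
    field_simp
    ring
  rw [harg, log_mul hX (exp_ne_zero _), log_exp]
  field_simp
  ring

lemma Vfun_yUpper (hμ : 0 < μ) (hσ : σ ≠ 0) (hr : 0 < r) (hq : 0 < q) :
    Vfun μ σ (r+q) (yUpper μ σ r q) = μ / r := by
  have : μ / (r + q) ≤ μ / r := div_le_div_of_nonneg_left hμ.le hr (by linarith)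
  rw [Vfun_of_bstar_le hσ (by linarith) (by unfold yUpper; linarith), yUpper]
  ring

lemma gam1_mul_div_lt_one (hσ : σ ≠ 0) (hr : 0 < r) : gam1 μ σ r * (μ / r) < 1 := by
  rw [← mul_div_assoc, div_lt_one hr]
  exact gam1_mul_lt hσ hr

lemma Lfun_strictAntiOn (hμ : 0 < μ) (hσ : σ ≠ 0) (hr : 0 < r) (hq : 0 < q) :
    StrictAntiOn (Lfun μ σ r q) (Ioo (bstar μ σ (r+q)) (yUpper μ σ r q)) := by
  have hrq : 0 < r + q := by linarith
  have ha₁ := gam1_pos (μ := μ) hσ hr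
  have ha₂ := gam2_neg (μ := μ) hσ hr
  have hV : ∀ y ∈ Ioo (bstar μ σ (r+q)) (yUpper μ σ r q),
      Vfun μ σ (r+q) y = μ / (r+q) + (y - bstar μ σ (r+q)) ∧
        0 < 1 - gam1 μ σ r * Vfun μ σ (r+q) y ∧ 0 < 1 - gam2 μ σ r * Vfun μ σ (r+q) y := by
    intro y hy
    have hu := Vfun_yUpper hμ hσ hr hq
    rw [Vfun_of_bstar_le hσ hrq (hy.1.trans hy.2).le] at hu
    have hVy := Vfun_of_bstar_le hσ hrq hy.1.le
    have hpos : 0 < Vfun μ σ (r+q) y := by rw [hVy]; have := div_pos hμ hrq; linarith [hy.1]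
    have hlt : Vfun μ σ (r+q) y < μ / r := by rw [hVy, ← hu]; linarith [hy.2]
    refine ⟨hVy, ?_, by nlinarith⟩
    nlinarith [gam1_mul_div_lt_one (μ := μ) hσ hr]
  intro y₁ hy₁ y₂ hy₂ h
  obtain ⟨hV₁, h₁, h₁'⟩ := hV y₁ hy₁
  obtain ⟨hV₂, h₂, h₂'⟩ := hV y₂ hy₂
  rw [Lfun_eq hσ hr hrq h₁.ne' h₁'.ne', Lfun_eq hσ hr hrq h₂.ne' h₂'.ne']
  have hV₁₂ : Vfun μ σ (r+q) y₁ < Vfun μ σ (r+q) y₂ := by rw [hV₁, hV₂]; linarith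
  generalize Vfun μ σ (r+q) y₁ = V₁ at *
  generalize Vfun μ σ (r+q) y₂ = V₂ at *
  generalize gam1 μ σ r = a₁ at *
  generalize gam2 μ σ r = a₂ at *
  have ha : 0 < a₁ - a₂ := by linarith
  have ha₂' : 0 < a₂ ^ 2 := by nlinarith
  refine mul_lt_mul_of_pos_left (log_lt_log (by positivity) ?_) (by positivity)
  rw [div_lt_div_iff₀ (by positivity) (by positivity)]
  nlinarith [mul_pos (mul_pos (mul_pos ha ha₂') (pow_pos ha₁ 2)) (sub_pos.2 hV₁₂)]

lemma Lfun_yUpper (hμ : 0 < μ) (hσ : σ ≠ 0) (hr : 0 < r) (hq : 0 < q) :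
    Lfun μ σ r q (yUpper μ σ r q) = 0 := by
  have hrq : 0 < r + q := by linarith
  have hV := Vfun_yUpper hμ hσ hr hq
  have h₁ : 1 - gam1 μ σ r * (μ / r) ≠ 0 := by
    linarith [gam1_mul_div_lt_one (μ := μ) hσ hr]
  have h₂ : 0 < 1 - gam2 μ σ r * (μ / r) := by
    nlinarith [gam2_neg (μ := μ) hσ hr, div_pos hμ hr]
  have hone : gam2 μ σ r ^ 2 * (1 - gam1 μ σ r * (μ / r)) =
      gam1 μ σ r ^ 2 * (1 - gam2 μ σ r * (μ / r)) := by
    linear_combination (gam2 μ σ r - gam1 μ σ r) * gam1_add_gam2_eq_mul (μ := μ) hσ hr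
  rw [Lfun_eq hσ hr hrq (hV ▸ h₁) (hV ▸ h₂.ne'), hV, hone,
    div_self (mul_pos (pow_pos (gam1_pos hσ hr) 2) h₂).ne', log_one, mul_zero]

end Threshold

theorem stmt19_general (μ σ r q : ℝ) (hμ : 0 < μ) (hσ : 0 < σ) (hr : 0 < r) (hq : 0 < q)
    (yl : ℝ)
    (hylb : yl ∈ Set.Ioo (bstar μ σ (r+q)) (yUpper μ σ r q)) :
    (∀ y ∈ Set.Icc yl (yUpper μ σ r q),
      StrictAntiOn (fun b => Lamfun μ σ r q b y) (Set.Ioo (bstar μ σ (r+q)) y)) ∧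
    (∀ y ∈ Set.Icc yl (yUpper μ σ r q),
      StrictAntiOn (fun b => e3F μ σ r q b y) (Set.Ioo (bstar μ σ (r+q)) y)) ∧
    StrictAntiOn (Lfun μ σ r q) (Set.Ioo yl (yUpper μ σ r q)) ∧
    Lfun μ σ r q (yUpper μ σ r q) = 0 :=
  ⟨fun _ _ => Lamfun_strictAntiOn hμ hσ.ne' hr hq,
    fun _ _ => (e3F_strictAntiOn hμ hσ.ne' hr hq).mono Ioo_subset_Ioi_self,
    (Lfun_strictAntiOn hμ hσ.ne' hr hq).mono (Ioo_subset_Ioo_left hylb.1.le),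
    Lfun_yUpper hμ hσ.ne' hr hq⟩

/-- with `Λ(b,y) = −e₄(b,y)/e₃(b,y)` and
`L(y) = (1/(γ₁−γ₂))log((γ₂²/γ₁²)Λ(y,y)) − y`:
(i) `b ↦ Λ(b,y)` is strictly decreasing on `(b*_{r+q}, y)` for `y ∈ [y_l,y_u]`;
(ii) so is `b ↦ e₃(b,y)`; (iii) `L` is strictly decreasing on `(y_l,y_u)`;
(iv) `L(y_u) = 0`. -/
theorem stmt19 (μ σ r q : ℝ) (hμ : 0 < μ) (hσ : 0 < σ) (hr : 0 < r) (hq : 0 < q)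
    (yl : ℝ) (hyl : yl ∈ Set.Ioo 0 (yUpper μ σ r q)) (hylf : fF μ σ r q yl = 0)
    (hyluniq : ∀ y ∈ Set.Ioo 0 (yUpper μ σ r q), fF μ σ r q y = 0 → y = yl)
    (hylb : yl ∈ Set.Ioo (bstar μ σ (r+q)) (yUpper μ σ r q)) :
    (∀ y ∈ Set.Icc yl (yUpper μ σ r q),
      StrictAntiOn (fun b => Lamfun μ σ r q b y) (Set.Ioo (bstar μ σ (r+q)) y)) ∧
    (∀ y ∈ Set.Icc yl (yUpper μ σ r q),
      StrictAntiOn (fun b => e3F μ σ r q b y) (Set.Ioo (bstar μ σ (r+q)) y)) ∧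
    StrictAntiOn (Lfun μ σ r q) (Set.Ioo yl (yUpper μ σ r q)) ∧
    Lfun μ σ r q (yUpper μ σ r q) = 0 :=
  stmt19_general μ σ r q hμ hσ hr hq yl hylb
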